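/- With the hypotheses of the previous statement (X·x = q^{-2}xX + (1-q^{-2})X² in a ℂ(q)-algebra A), for every n ≥ 0 one has (X - x)^n = ∑_{k=0}^{n} (-1)^{n-k} [n choose k]_q q^{-k(n-1)} x^{n-k} X^{k}. -/

import Mathlib

open Finset

noncomputable def qq : RatFunc ℂ := RatFunc.X

noncomputable def qint (m : ℕ) : RatFunc ℂ := (qq ^ m - qq⁻¹ ^ m) / (qq - qq⁻¹)

noncomputable def qfact : ℕ → RatFunc ℂ
  | 0 => 1
  | n + 1 => qint (n + 1) * qfact n

noncomputable def qbinom (n r : ℕ) : RatFunc ℂ :=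
  if r ≤ n then qfact n / (qfact (n - r) * qfact r) else 0

/-!
With t = q⁻², the relation says exactly X (X - x) = t (X - x) X, hence Xᵏ (X - x) = tᵏ (X - x) Xᵏ.
Multiplying the expansion of (X - x)ⁿ on the right by X - x therefore yields the recursion
c(n+1, k+1) = tᵏ c(n, k) - tᵏ⁺¹ c(n, k+1) for its coefficients, and the claimed coefficients satisfy
it by the q-Pascal rule [n+1, k+1] = qⁿ⁻ᵏ [n, k] + q⁻ᵏ⁻¹ [n, k+1].
-/

lemma qq_ne_zero : qq ≠ 0 := RatFunc.X_ne_zero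

lemma qq_pow_sub_inv_pow_ne_zero {m : ℕ} (hm : m ≠ 0) : qq ^ m - qq⁻¹ ^ m ≠ 0 := by
  have hpow : qq ^ (2 * m) ≠ 1 := fun h =>
    (RatFunc.transcendental_X.pow (by omega)) (h ▸ isAlgebraic_one)
  have hfac : qq ^ m - qq⁻¹ ^ m = qq⁻¹ ^ m * (qq ^ (2 * m) - 1) := by
    rw [mul_sub, mul_one, two_mul, pow_add, ← mul_assoc, ← mul_pow,
      inv_mul_cancel₀ qq_ne_zero, one_pow, one_mul]
  rw [hfac]
  exact mul_ne_zero (pow_ne_zero _ (inv_ne_zero qq_ne_zero)) (sub_ne_zero.mpr hpow)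

lemma qint_ne_zero {m : ℕ} (hm : m ≠ 0) : qint m ≠ 0 :=
  div_ne_zero (qq_pow_sub_inv_pow_ne_zero hm)
    (by simpa using qq_pow_sub_inv_pow_ne_zero one_ne_zero)

lemma qint_add (m n : ℕ) : qint (m + n) = qq ^ n * qint m + qq⁻¹ ^ m * qint n := by
  have := qq_ne_zero
  simp only [qint]
  field_simp
  ring

lemma qfact_ne_zero (n : ℕ) : qfact n ≠ 0 := by
  induction n with
  | zero => exact one_ne_zero
  | succ n ih => exact mul_ne_zero (qint_ne_zero n.succ_ne_zero) ih

lemma qbinom_zero_right (n : ℕ) : qbinom n 0 = 1 := by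
  simp [qbinom, qfact, qfact_ne_zero]

lemma qbinom_self (n : ℕ) : qbinom n n = 1 := by
  simp [qbinom, qfact, qfact_ne_zero]

lemma qbinom_of_lt {n k : ℕ} (h : n < k) : qbinom n k = 0 := by
  simp [qbinom, h.not_ge]

lemma qbinom_succ_succ (n k : ℕ) :
    qbinom (n + 1) (k + 1) = qq ^ (n - k) * qbinom n k + qq⁻¹ ^ (k + 1) * qbinom n (k + 1) := by
  rcases lt_trichotomy k n with hlt | rfl | hgt
  · obtain ⟨b, rfl⟩ := Nat.exists_eq_add_of_lt hlt
    have hsub : k + b + 1 + 1 - (k + 1) = b + 1 ∧ k + b + 1 - k = b + 1 ∧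
        k + b + 1 - (k + 1) = b := by
      omega
    simp only [qbinom, hsub, if_pos (by omega : k + 1 ≤ k + b + 1 + 1),
      if_pos (by omega : k ≤ k + b + 1), if_pos (by omega : k + 1 ≤ k + b + 1)]
    have hfact : qfact (k + b + 1 + 1) =
        (qq ^ (b + 1) * qint (k + 1) + qq⁻¹ ^ (k + 1) * qint (b + 1)) * qfact (k + b + 1) := by
      rw [← qint_add, show k + 1 + (b + 1) = k + b + 1 + 1 by ring]
      rfl
    have hk : qfact (k + 1) = qint (k + 1) * qfact k := rfl
    have hb : qfact (b + 1) = qint (b + 1) * qfact b := rfl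
    rw [hfact, hk, hb]
    field_simp [qfact_ne_zero, qint_ne_zero k.succ_ne_zero, qint_ne_zero b.succ_ne_zero]
  · simp [qbinom_self, qbinom_of_lt]
  · simp [qbinom_of_lt, hgt, hgt.trans (Nat.lt_succ_self k)]

section QCommuting

variable {R A : Type*} [CommRing R] [Ring A] [Algebra R A] {t : R}

lemma pow_mul_eq_smul_mul_pow {a b : A} (h : a * b = t • (b * a)) (k : ℕ) :
    a ^ k * b = t ^ k • (b * a ^ k) := by
  induction k with
  | zero => simp
  | succ k ih =>
    rw [pow_succ', mul_assoc, ih, mul_smul_comm, ← mul_assoc, h, smul_mul_assoc, smul_smul,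
      mul_assoc, ← pow_succ', ← pow_succ]

theorem sub_pow_eq_sum_of_mul_sub_eq_smul {x X : A} (h : X * (X - x) = t • ((X - x) * X))
    (c : ℕ → ℕ → R) (hc₀ : c 0 0 = 1) (hc_zero : ∀ n, c (n + 1) 0 = -c n 0)
    (hc_succ : ∀ n k, c (n + 1) (k + 1) = c n k * t ^ k - c n (k + 1) * t ^ (k + 1))
    (hc_top : ∀ n, c n (n + 1) = 0) (n : ℕ) :
    (X - x) ^ n = ∑ k ∈ range (n + 1), c n k • (x ^ (n - k) * X ^ k) := by
  induction n with
  | zero => simp [hc₀]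
  | succ n ih =>
    set F : ℕ → A := fun k => (c n k * t ^ k) • (x ^ (n + 1 - k) * X ^ k) with hF
    set G : ℕ → A := fun k => (c n k * t ^ k) • (x ^ (n - k) * X ^ (k + 1)) with hG
    have hterm : ∀ k ∈ range (n + 1), c n k • (x ^ (n - k) * X ^ k) * (X - x) = G k - F k := by
      intro k hk
      have hnk : n + 1 - k = n - k + 1 := by have := mem_range.mp hk; omega
      rw [smul_mul_assoc, mul_assoc, pow_mul_eq_smul_mul_pow h, mul_smul_comm, smul_smul,
        sub_mul, mul_sub, smul_sub, ← pow_succ', ← mul_assoc (x ^ (n - k)) x, ← pow_succ, ← hnk]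
    have hF_top : F (n + 1) = 0 := by simp [hF, hc_top]
    calc (X - x) ^ (n + 1) = ∑ k ∈ range (n + 1), (G k - F k) := by
          rw [pow_succ, ih, sum_mul]; exact sum_congr rfl hterm
      _ = ∑ k ∈ range (n + 1), (G k - F (k + 1)) - F 0 := by
          rw [sum_sub_distrib, sum_sub_distrib, sub_sub, ← sum_range_succ' F,
            sum_range_succ F (n + 1), hF_top, add_zero]
      _ = ∑ k ∈ range (n + 1 + 1), c (n + 1) k • (x ^ (n + 1 - k) * X ^ k) := by
          rw [sum_range_succ' _ (n + 1), sub_eq_add_neg]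
          congr 1
          · refine sum_congr rfl fun k _ => ?_
            simp [hF, hG, hc_succ, sub_smul]
          · simp [hF, hc_zero]

end QCommuting

noncomputable def subPowCoeff (n k : ℕ) : RatFunc ℂ :=
  (-1) ^ (n - k) * qbinom n k * qq⁻¹ ^ (k * (n - 1))

lemma subPowCoeff_zero_zero : subPowCoeff 0 0 = 1 := by
  simp [subPowCoeff, qbinom_self]

lemma subPowCoeff_succ_zero (n : ℕ) : subPowCoeff (n + 1) 0 = -subPowCoeff n 0 := by
  simp [subPowCoeff, qbinom_zero_right, pow_succ]

lemma subPowCoeff_self_succ (n : ℕ) : subPowCoeff n (n + 1) = 0 := by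
  simp [subPowCoeff, qbinom_of_lt]

lemma subPowCoeff_succ_succ (n k : ℕ) :
    subPowCoeff (n + 1) (k + 1) =
      subPowCoeff n k * (qq⁻¹ ^ 2) ^ k - subPowCoeff n (k + 1) * (qq⁻¹ ^ 2) ^ (k + 1) := by
  have := qq_ne_zero
  rcases lt_trichotomy k n with hlt | rfl | hgt
  · obtain ⟨b, rfl⟩ := Nat.exists_eq_add_of_lt hlt
    have hsub : k + b + 1 + 1 - (k + 1) = b + 1 ∧ k + b + 1 - k = b + 1 ∧
        k + b + 1 - (k + 1) = b ∧ k + b + 1 + 1 - 1 = k + b + 1 ∧ k + b + 1 - 1 = k + b := by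
      omega
    simp only [subPowCoeff, hsub]
    rw [qbinom_succ_succ (k + b + 1) k, hsub.2.1]
    simp only [inv_pow]
    field_simp
    ring
  · simp only [subPowCoeff, qbinom_self, qbinom_of_lt (Nat.lt_succ_self _), Nat.sub_self,
      Nat.add_sub_cancel, pow_zero, one_mul, mul_zero, zero_mul, sub_zero, ← pow_mul, ← pow_add]
    congr 1
    rcases k with _ | k
    · rfl
    · simp only [Nat.add_sub_cancel]
      ring
  · simp [subPowCoeff, qbinom_of_lt, hgt, hgt.trans (Nat.lt_succ_self k)]

/-- (X-x)ⁿ = ∑ₖ (-1)^{n-k} [n k]_q q^{-k(n-1)} x^{n-k} Xᵏ. -/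
theorem stmt4 {A : Type*} [Ring A] [Algebra (RatFunc ℂ) A] (x X : A)
    (h : X * x = algebraMap (RatFunc ℂ) A (qq⁻¹ ^ 2) * (x * X)
        + (1 - algebraMap (RatFunc ℂ) A (qq⁻¹ ^ 2)) * X ^ 2) (n : ℕ) :
    (X - x) ^ n = ∑ k ∈ Finset.range (n + 1),
        algebraMap (RatFunc ℂ) A ((-1) ^ (n - k) * qbinom n k * qq⁻¹ ^ (k * (n - 1)))
          * (x ^ (n - k) * X ^ k) := by
  have hcomm : X * (X - x) = qq⁻¹ ^ 2 • ((X - x) * X) := by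
    rw [mul_sub, ← pow_two, h, Algebra.smul_def]
    noncomm_ring
  simpa only [Algebra.smul_def, subPowCoeff] using
    sub_pow_eq_sum_of_mul_sub_eq_smul hcomm subPowCoeff subPowCoeff_zero_zero subPowCoeff_succ_zero
      subPowCoeff_succ_succ subPowCoeff_self_succ n
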